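/- arXiv:2010.05059 — 2 statements merged into one kernel-verified Lean document; each statement's English description precedes it below -/
import Mathlib

section
/- Fix nonnegative integer vectors m = (m_1, ..., m_n) and a = (a_1, ..., a_n) with ‖a‖ < ‖m‖ and a_1 = 0. Let f_i(m, a) be the fraction of all (m,a)-permutations whose last term is i. Then for every i, f_1(m, a) · m_i ≤ f_i(m, a) · m_1. -/
/-- An `(m, a)`-permutation: a word of length `‖m‖ = ∑ i, m i` over the alphabet `Fin n`
in which letter `i` appears exactly `m i` times, and where the block of `a i` consecutive
positions starting at `∑_{j < i} a j` is forbidden from taking the value `i`. -/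
def IsMAPerm (n : ℕ) (m a : Fin n → ℕ) (w : Fin (∑ i, m i) → Fin n) : Prop :=
  (∀ i : Fin n, (Finset.univ.filter (fun p => w p = i)).card = m i) ∧
  ∀ i : Fin n, ∀ p : Fin (∑ i, m i),
    (∑ j ∈ Finset.univ.filter (fun j => j < i), a j) ≤ (p : ℕ) →
    (p : ℕ) < (∑ j ∈ Finset.univ.filter (fun j => j < i), a j) + a i →
    w p ≠ i

/-- The fraction of `(m, a)`-permutations whose last term is `i`. -/
noncomputable def fracLast (n : ℕ) (m a : Fin n → ℕ) (hA : ∑ i, a i < ∑ i, m i)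
    (i : Fin n) : ℝ :=
  (Nat.card {w : Fin (∑ i, m i) → Fin n //
      IsMAPerm n m a w ∧ w ⟨(∑ i, m i) - 1, by omega⟩ = i} : ℝ) /
    (Nat.card {w : Fin (∑ i, m i) → Fin n // IsMAPerm n m a w} : ℝ)

open Finset

lemma card_filter_prod_eq_card_filter_mul {α β : Type*} [Fintype α] [Fintype β]
    (Q : α → Prop) (R : α → β → Prop) [DecidablePred Q] [∀ x, DecidablePred (R x)] {c : ℕ}
    (hc : ∀ x, Q x → #(univ.filter (R x)) = c) :
    #(univ.filter fun y : α × β => Q y.1 ∧ R y.1 y.2) = #(univ.filter Q) * c := by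
  rw [card_filter, Fintype.sum_prod_type, card_eq_sum_ones, sum_filter, sum_mul]
  refine sum_congr rfl fun x _ => ?_
  by_cases hx : Q x
  · rw [if_pos hx, one_mul, ← hc x hx, card_filter]
    simp only [hx, true_and]
  · simp only [hx, false_and, if_false, sum_const_zero, zero_mul]

lemma card_filter_comp_equiv {α β : Type*} [Fintype α] [DecidableEq β] (w : α → β)
    (σ : α ≃ α) (b : β) :
    #(univ.filter fun x => w (σ x) = b) = #(univ.filter fun x => w x = b) :=
  card_equiv σ (by simp)

lemma sum_filter_lt_add_le_sum {n : ℕ} (a : Fin n → ℕ) (i : Fin n) :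
    (∑ j ∈ univ.filter (· < i), a j) + a i ≤ ∑ j, a j := by
  rw [add_comm, ← sum_insert (by simp)]
  exact sum_le_sum_of_subset (subset_univ _)

variable {n : ℕ} {m a : Fin n → ℕ}

lemma IsMAPerm.comp_swap {w : Fin (∑ i, m i) → Fin n} (hw : IsMAPerm n m a w)
    {p : Fin (∑ i, m i)} (hp : ∑ i, a i ≤ p) (hwp : a (w p) = 0) (q : Fin (∑ i, m i)) :
    IsMAPerm n m a (w ∘ Equiv.swap p q) := by
  refine ⟨fun j => (card_filter_comp_equiv w _ j).trans (hw.1 j), fun j r hr₁ hr₂ => ?_⟩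
  have hrp : r ≠ p := by
    rintro rfl
    have := sum_filter_lt_add_le_sum a j
    omega
  by_cases hrq : r = q
  · subst hrq
    rw [Function.comp_apply, Equiv.swap_apply_right]
    rintro rfl
    omega
  · rw [Function.comp_apply, Equiv.swap_apply_of_ne_of_ne hrp hrq]
    exact hw.2 j r hr₁ hr₂

open scoped Classical in
/-- Swapping position `p` with each occurrence of `i` injects pairs (word with `w p = z`,
occurrence of `i`) into pairs (word with `w p = i`, occurrence of `z`). -/
theorem card_isMAPerm_apply_eq_mul_le {z : Fin n} (hz : a z = 0) {p : Fin (∑ i, m i)}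
    (hp : ∑ i, a i ≤ p) (i : Fin n) :
    #(univ.filter fun w => IsMAPerm n m a w ∧ w p = z) * m i ≤
      #(univ.filter fun w => IsMAPerm n m a w ∧ w p = i) * m z := by
  rw [← card_filter_prod_eq_card_filter_mul _ (fun w q => w q = i) fun w hw => hw.1.1 i,
    ← card_filter_prod_eq_card_filter_mul _ (fun w q => w q = z) fun w hw => hw.1.1 z]
  refine card_le_card_of_injOn (fun x => (x.1 ∘ Equiv.swap p x.2, x.2)) ?_ ?_
  · rintro ⟨w, q⟩ hx
    simp only [coe_filter, mem_univ, true_and, Set.mem_ofPred_eq] at hx ⊢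
    obtain ⟨⟨hw, hwp⟩, hwq⟩ := hx
    refine ⟨⟨hw.comp_swap hp (hwp ▸ hz) q, ?_⟩, ?_⟩ <;> simp [hwp, hwq]
  · rintro ⟨w₁, q⟩ _ ⟨w₂, q'⟩ _ h
    obtain ⟨hw, rfl⟩ := Prod.mk.inj h
    simpa using (Equiv.swap p q).surjective.injective_comp_right hw

theorem stmt_4_general (n : ℕ) (hn : 0 < n) (m a : Fin n → ℕ) (hA : ∑ i, a i < ∑ i, m i)
    (ha1 : a ⟨0, hn⟩ = 0) (i : Fin n) :
    fracLast n m a hA ⟨0, hn⟩ * (m i : ℝ) ≤ fracLast n m a hA i * (m ⟨0, hn⟩ : ℝ) := by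
  classical
  have key := card_isMAPerm_apply_eq_mul_le (m := m) ha1 (p := ⟨(∑ i, m i) - 1, by omega⟩)
    (by dsimp only; omega) i
  simp only [fracLast, Nat.card_eq_fintype_card, Fintype.card_subtype, div_mul_eq_mul_div]
  exact div_le_div_of_nonneg_right (by exact_mod_cast key) (Nat.cast_nonneg _)

theorem stmt_4 (n : ℕ) (hn : 0 < n) (m a : Fin n → ℕ) (hA : ∑ i, a i < ∑ i, m i)
    (ha1 : a ⟨0, hn⟩ = 0) (hm1 : 0 < m ⟨0, hn⟩)
    (hne : Nonempty {w : Fin (∑ i, m i) → Fin n // IsMAPerm n m a w}) (i : Fin n) :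
    fracLast n m a hA ⟨0, hn⟩ * (m i : ℝ) ≤ fracLast n m a hA i * (m ⟨0, hn⟩ : ℝ) :=
  stmt_4_general n hn m a hA ha1 i
end

section
/- Fix m ≥ 1 and 1 ≤ j ≤ m. For a uniformly random π from S_{m,n}, let T_j be the smallest index t such that π_t is the j-th occurrence of some card type. Then for t = γ n^{1 - 1/j} with γ > 0 (γ may depend on n, with t a positive integer at most mn), we have Pr[T_j > t] ≥ 1 - C γ^j for some constant C depending only on m. -/
/-- The finset of words of length `m * n` over `Fin n` where each letter appears
exactly `m` times (the deck `S_{m,n}`). -/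
def wordFinset (m n : ℕ) : Finset (Fin (m * n) → Fin n) :=
  Finset.univ.filter
    (fun w => ∀ i : Fin n, (Finset.univ.filter (fun p => w p = i)).card = m)

/-- `Tj m n j w` is the smallest index `t` (1-indexed) such that among the first `t`
letters of `w` some letter appears `j` times. -/
noncomputable def Tj (m n j : ℕ) (w : Fin (m * n) → Fin n) : ℕ :=
  sInf {t : ℕ | ∃ i : Fin n,
    j ≤ (Finset.univ.filter (fun p : Fin (m * n) => (p : ℕ) < t ∧ w p = i)).card}

/-!
Fix `j` positions of a uniformly random word of `S_{m,n}`. All `C(mn, j)` position sets are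
alike, and double counting pairs (position set, word) shows that they all carry the letter `i`
with probability `C(m, j) / C(mn, j)`. The event `T_j ≤ t` says some letter fills `j` of the
first `t` positions, so a union bound over the letter and over those `j` positions bounds its
probability by `n C(t, j) C(m, j) / C(mn, j) ≤ n (2t / n)^j`, which is `2^j γ^j` at
`t = γ n^{1 - 1/j}`.
-/

open Finset

def prefixCount {N : ℕ} {α : Type*} [DecidableEq α] (w : Fin N → α) (t : ℕ) (i : α) : ℕ :=
  #{p : Fin N | (p : ℕ) < t ∧ w p = i}

lemma prefixCount_mono {N : ℕ} {α : Type*} [DecidableEq α] (w : Fin N → α) (i : α) :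
    Monotone (prefixCount w · i) := fun s u hsu =>
  card_le_card fun p hp => by
    simp only [mem_filter, mem_univ, true_and] at hp ⊢
    exact ⟨hp.1.trans_le hsu, hp.2⟩

section Words

variable {m n : ℕ}

lemma mem_wordFinset {w : Fin (m * n) → Fin n} :
    w ∈ wordFinset m n ↔ ∀ i, #{p | w p = i} = m := by
  simp [wordFinset]

lemma wordFinset_nonempty : (wordFinset m n).Nonempty := by
  refine ⟨fun p => (finProdFinEquiv.symm p).2, mem_wordFinset.2 fun i => ?_⟩
  calc #{p | (finProdFinEquiv.symm p).2 = i}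
      = #(univ ×ˢ {i} : Finset (Fin m × Fin n)) :=
        card_equiv finProdFinEquiv.symm (by simp [eq_comm])
    _ = m := by simp

lemma comp_perm_mem_wordFinset (σ : Equiv.Perm (Fin (m * n))) {w : Fin (m * n) → Fin n}
    (hw : w ∈ wordFinset m n) : w ∘ σ ∈ wordFinset m n := by
  rw [mem_wordFinset] at hw ⊢
  exact fun i => (card_equiv σ (by simp)).trans (hw i)

lemma prefixCount_mul_eq {w : Fin (m * n) → Fin n} (hw : w ∈ wordFinset m n) (i : Fin n) :
    prefixCount w (m * n) i = m := by
  simpa [prefixCount] using mem_wordFinset.1 hw i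

/-- A permutation of positions carrying `A` into `B` turns words constant on `B` into words
constant on `A`. -/
lemma card_filter_forall_eq_le {A B : Finset (Fin (m * n))} (hAB : #A = #B) (i : Fin n) :
    #{w ∈ wordFinset m n | ∀ p ∈ B, w p = i} ≤ #{w ∈ wordFinset m n | ∀ p ∈ A, w p = i} := by
  classical
  let σ : Equiv.Perm (Fin (m * n)) := Equiv.extendSubtype (A.equivOfCardEq hAB)
  refine card_le_card_of_injOn (· ∘ σ) (fun w hw => ?_) σ.surjective.injective_comp_right.injOn
  rw [mem_coe, mem_filter] at hw ⊢
  exact ⟨comp_perm_mem_wordFinset σ hw.1, fun p hp => hw.2 _ (Equiv.extendSubtype_mem _ p hp)⟩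

lemma choose_mul_card_filter_forall_eq {j : ℕ} {A : Finset (Fin (m * n))} (hA : #A = j)
    (i : Fin n) :
    (m * n).choose j * #{w ∈ wordFinset m n | ∀ p ∈ A, w p = i}
      = #(wordFinset m n) * m.choose j := by
  have hcount := card_mul_eq_card_mul (fun B w => ∀ p ∈ B, w p = i)
    (s := powersetCard j univ) (t := wordFinset m n)
    (m := #{w ∈ wordFinset m n | ∀ p ∈ A, w p = i}) (n := m.choose j)
    (fun B hB => by
      rw [bipartiteAbove]
      exact (card_filter_forall_eq_le (hA.trans (mem_powersetCard.1 hB).2.symm) i).antisymm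
        (card_filter_forall_eq_le ((mem_powersetCard.1 hB).2.trans hA.symm) i))
    (fun w hw => ?_)
  · simpa [card_powersetCard] using hcount
  · calc #(bipartiteBelow (fun B w => ∀ p ∈ B, w p = i) (powersetCard j univ) w)
        = #(powersetCard j {p | w p = i}) := by
          congr 1
          ext B
          simp [bipartiteBelow, mem_powersetCard, subset_iff, and_comm]
      _ = m.choose j := by rw [card_powersetCard, mem_wordFinset.1 hw i]

lemma lt_Tj_iff {j t : ℕ} (hn : 0 < n) (hjm : j ≤ m) {w : Fin (m * n) → Fin n}
    (hw : w ∈ wordFinset m n) : t < Tj m n j w ↔ ∀ i, prefixCount w t i < j := by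
  set S : Set ℕ := {t | ∃ i, j ≤ prefixCount w t i}
  have hS : m * n ∈ S := ⟨⟨0, hn⟩, (prefixCount_mul_eq hw _).symm ▸ hjm⟩
  have hlt_sInf : t < sInf S ↔ t ∉ S := by
    refine ⟨Nat.notMem_of_lt_sInf, fun ht => lt_of_not_ge fun hle => ht ?_⟩
    obtain ⟨i, hi⟩ := Nat.sInf_mem ⟨_, hS⟩
    exact ⟨i, hi.trans (prefixCount_mono w i hle)⟩
  rw [show Tj m n j w = sInf S from rfl]
  simpa [S] using hlt_sInf

/-- The event `T_j ≤ t`. -/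
def hitWords (m n j t : ℕ) : Finset (Fin (m * n) → Fin n) :=
  {w ∈ wordFinset m n | ∃ i, j ≤ prefixCount w t i}

lemma card_hitWords_mul_choose_le {j t : ℕ} (ht : t ≤ m * n) :
    #(hitWords m n j t) * (m * n).choose j
      ≤ n * t.choose j * (#(wordFinset m n) * m.choose j) := by
  set T : Finset (Fin (m * n)) := {p | (p : ℕ) < t}
  have hT : #T = t := by simp [T, Fin.card_filter_val_lt, ht]
  set P := (univ : Finset (Fin n)) ×ˢ powersetCard j T
  have hsub : hitWords m n j t ⊆
      P.biUnion fun x => {w ∈ wordFinset m n | ∀ p ∈ x.2, w p = x.1} := by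
    intro w hw
    obtain ⟨hw, i, hi⟩ := mem_filter.1 hw
    obtain ⟨A, hAsub, hA⟩ := exists_subset_card_eq hi
    have hA' : ∀ p ∈ A, (p : ℕ) < t ∧ w p = i := fun p hp => by simpa using hAsub hp
    refine mem_biUnion.2 ⟨(i, A), ?_, mem_filter.2 ⟨hw, fun p hp => (hA' p hp).2⟩⟩
    exact mem_product.2
      ⟨mem_univ _, mem_powersetCard.2 ⟨fun p hp => by simp [T, (hA' p hp).1], hA⟩⟩
  calc #(hitWords m n j t) * (m * n).choose j
      ≤ (∑ x ∈ P, #{w ∈ wordFinset m n | ∀ p ∈ x.2, w p = x.1}) * (m * n).choose j := by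
        gcongr
        exact (card_le_card hsub).trans card_biUnion_le
    _ = ∑ x ∈ P, #(wordFinset m n) * m.choose j := by
        rw [sum_mul]
        refine sum_congr rfl fun x hx => ?_
        rw [mul_comm, choose_mul_card_filter_forall_eq (mem_powersetCard.1 (mem_product.1 hx).2).2]
    _ = n * t.choose j * (#(wordFinset m n) * m.choose j) := by
        simp [P, card_powersetCard, hT]

end Words

lemma pow_le_two_pow_mul_descFactorial {m n j : ℕ} (hn : 2 ≤ n) (hjm : j ≤ m) :
    (m * n) ^ j ≤ 2 ^ j * (m * n).descFactorial j := by
  have h2m : m * 2 ≤ m * n := Nat.mul_le_mul_left m hn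
  calc (m * n) ^ j ≤ (2 * (m * n + 1 - j)) ^ j :=
      Nat.pow_le_pow_left (by omega) j
    _ = 2 ^ j * (m * n + 1 - j) ^ j := mul_pow _ _ _
    _ ≤ 2 ^ j * (m * n).descFactorial j := by gcongr; exact Nat.pow_sub_le_descFactorial _ _

lemma pow_mul_choose_mul_choose_le {m n j : ℕ} (t : ℕ) (hn : 2 ≤ n) (hjm : j ≤ m) :
    n ^ j * (t.choose j * m.choose j) ≤ 2 ^ j * (t ^ j * (m * n).choose j) := by
  refine Nat.le_of_mul_le_mul_right ?_ j.factorial_pos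
  calc n ^ j * (t.choose j * m.choose j) * j.factorial
      = t.choose j * (n ^ j * m.descFactorial j) := by
        rw [Nat.descFactorial_eq_factorial_mul_choose]; ring
    _ ≤ t ^ j * (m * n) ^ j := by
        rw [mul_pow, mul_comm (m ^ j)]
        gcongr
        exacts [Nat.choose_le_pow _ _, Nat.descFactorial_le_pow _ _]
    _ ≤ t ^ j * (2 ^ j * (m * n).descFactorial j) := by
        gcongr; exact pow_le_two_pow_mul_descFactorial hn hjm
    _ = 2 ^ j * (t ^ j * (m * n).choose j) * j.factorial := by
        rw [Nat.descFactorial_eq_factorial_mul_choose]; ring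

lemma card_hitWords_mul_pow_le {m n j t : ℕ} (hn : 2 ≤ n) (hjm : j ≤ m) (ht : t ≤ m * n) :
    #(hitWords m n j t) * n ^ j ≤ 2 ^ j * t ^ j * n * #(wordFinset m n) := by
  have hpos : 0 < (m * n).choose j :=
    Nat.choose_pos (hjm.trans (Nat.le_mul_of_pos_right m (by omega)))
  refine Nat.le_of_mul_le_mul_right ?_ hpos
  calc #(hitWords m n j t) * n ^ j * (m * n).choose j
      = n ^ j * (#(hitWords m n j t) * (m * n).choose j) := by ring
    _ ≤ n ^ j * (n * t.choose j * (#(wordFinset m n) * m.choose j)) :=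
        Nat.mul_le_mul_left _ (card_hitWords_mul_choose_le ht)
    _ = n * #(wordFinset m n) * (n ^ j * (t.choose j * m.choose j)) := by ring
    _ ≤ n * #(wordFinset m n) * (2 ^ j * (t ^ j * (m * n).choose j)) :=
        Nat.mul_le_mul_left _ (pow_mul_choose_mul_choose_le t hn hjm)
    _ = 2 ^ j * t ^ j * n * #(wordFinset m n) * (m * n).choose j := by ring

lemma rpow_one_sub_inv_pow_mul_self {x : ℝ} (hx : 0 < x) {j : ℕ} (hj : j ≠ 0) :
    (x ^ ((1 : ℝ) - 1 / j)) ^ j * x = x ^ j := by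
  have hexp : (1 - 1 / j : ℝ) * j + 1 = j := by field_simp; ring
  rw [← Real.rpow_natCast (x ^ ((1 : ℝ) - 1 / j)) j, ← Real.rpow_mul hx.le,
    ← Real.rpow_add_one hx.ne', hexp, Real.rpow_natCast]

theorem stmt_15_general (m j : ℕ) (hj1 : 1 ≤ j) (hjm : j ≤ m) :
    ∃ C : ℝ, 0 < C ∧ ∃ n₀ : ℕ, ∀ n : ℕ, n₀ ≤ n → ∀ γ : ℝ, 0 < γ → ∀ t : ℕ,
      1 ≤ t → t ≤ m * n → (t : ℝ) = γ * (n : ℝ) ^ ((1 : ℝ) - 1 / j) →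
      1 - C * γ ^ j ≤
        (((wordFinset m n).filter (fun w => t < Tj m n j w)).card : ℝ) /
          ((wordFinset m n).card : ℝ) := by
  refine ⟨2 ^ j, by positivity, 2, fun n hn γ _ t _ htn htγ => ?_⟩
  have hW : (0 : ℝ) < #(wordFinset m n) := by exact_mod_cast wordFinset_nonempty.card_pos
  have hgood : {w ∈ wordFinset m n | t < Tj m n j w} = wordFinset m n \ hitWords m n j t := by
    rw [hitWords, ← filter_not]
    exact filter_congr fun w hw => by simpa using lt_Tj_iff (by omega) hjm hw
  have hhit : (#(hitWords m n j t) : ℝ) ≤ 2 ^ j * γ ^ j * #(wordFinset m n) := by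
    have htj : (t : ℝ) ^ j * n = γ ^ j * n ^ j := by
      rw [htγ, mul_pow, mul_assoc, rpow_one_sub_inv_pow_mul_self (by positivity) (by omega)]
    refine le_of_mul_le_mul_right ?_ (by positivity : (0 : ℝ) < n ^ j)
    calc (#(hitWords m n j t) : ℝ) * n ^ j ≤ 2 ^ j * t ^ j * n * #(wordFinset m n) := by
          exact_mod_cast card_hitWords_mul_pow_le hn hjm htn
      _ = 2 ^ j * γ ^ j * #(wordFinset m n) * n ^ j := by rw [mul_assoc _ _ (n : ℝ), htj]; ring
  have hsub : hitWords m n j t ⊆ wordFinset m n := filter_subset _ _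
  rw [hgood, card_sdiff_of_subset hsub, Nat.cast_sub (card_le_card hsub), le_div_iff₀ hW]
  linarith

theorem stmt_15 (m j : ℕ) (hm : 1 ≤ m) (hj1 : 1 ≤ j) (hjm : j ≤ m) :
    ∃ C : ℝ, 0 < C ∧ ∃ n₀ : ℕ, ∀ n : ℕ, n₀ ≤ n → ∀ γ : ℝ, 0 < γ → ∀ t : ℕ,
      1 ≤ t → t ≤ m * n → (t : ℝ) = γ * (n : ℝ) ^ ((1 : ℝ) - 1 / j) →
      1 - C * γ ^ j ≤
        (((wordFinset m n).filter (fun w => t < Tj m n j w)).card : ℝ) /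
          ((wordFinset m n).card : ℝ) :=
  stmt_15_general m j hj1 hjm
end
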